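/- arXiv:1912.07316 — 5 statements merged into one kernel-verified Lean document; each statement's English description precedes it below -/
import Mathlib

section
/- Let K be a continuous positive-definite kernel on a compact Ω with RKHS H_K(Ω) and orthonormal basis {φ_ℓ}_{ℓ=1}^∞. Let X_n ⊂ Ω be n distinct points such that the matrix Φ_{X_n} = (φ_m(x_k)) is invertible, and let Λ_φ(X_n) be the Lebesgue constant of interpolation in span{φ_1,...,φ_n}. Then for any f ∈ H_K(Ω), the interpolant s_f^φ to f at X_n from span{φ_1,...,φ_n} satisfies |f(x) − s_f^φ(x)| ≤ ‖f‖_{H_K(Ω)} (1 + Λ_φ(X_n)) sup_{y∈Ω} (Σ_{ℓ=n+1}^∞ φ_ℓ(y)^2)^{1/2} for all x ∈ Ω. -/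
/-! Write `f = P f + r` with `P f = ∑_{m<n} c_m φ_m`. Cauchy–Schwarz on the tail of the
expansion gives `|r| ≤ ‖c‖ S` on `Ω`. The function `s - P f` lies in `span{φ_0,…,φ_{n-1}}`,
which the Lagrange basis reproduces from its values at the nodes; as `s` interpolates `f`,
those values are `r(x_k)`, so `f - s = r - ∑_k r(x_k) u_k` and the bound follows from the
Lebesgue constant. -/

open Finset Matrix

theorem abs_tsum_mul_le_sqrt_mul_sqrt {ι : Type*} {a b : ι → ℝ}
    (ha : Summable fun i => a i ^ 2) (hb : Summable fun i => b i ^ 2) :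
    |∑' i, a i * b i| ≤ √(∑' i, a i ^ 2) * √(∑' i, b i ^ 2) := by
  have hsq : ∀ v : ι → ℝ, (fun i => |v i| ^ (2 : ℝ)) = fun i => v i ^ 2 := fun v => by
    ext i; rw [Real.rpow_two, sq_abs]
  obtain ⟨habs, hle⟩ := Real.summable_and_inner_le_Lp_mul_Lq_tsum_of_nonneg
    Real.HolderConjugate.two_two (fun i => abs_nonneg (a i)) (fun i => abs_nonneg (b i))
    (by rwa [hsq]) (by rwa [hsq])
  rw [hsq a, hsq b, ← Real.sqrt_eq_rpow, ← Real.sqrt_eq_rpow] at hle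
  calc |∑' i, a i * b i| = ‖∑' i, a i * b i‖ := (Real.norm_eq_abs _).symm
    _ ≤ ∑' i, ‖a i * b i‖ :=
        norm_tsum_le_tsum_norm (by simpa only [norm_mul, Real.norm_eq_abs] using habs)
    _ = ∑' i, |a i| * |b i| := by simp only [norm_mul, Real.norm_eq_abs]
    _ ≤ _ := hle

theorem abs_sub_sum_range_le_sqrt_mul_sqrt {a b : ℕ → ℝ} {t : ℝ}
    (ha : Summable fun ℓ => a ℓ ^ 2) (hb : Summable fun ℓ => b ℓ ^ 2)
    (ht : HasSum (fun ℓ => a ℓ * b ℓ) t) (n : ℕ) :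
    |t - ∑ i ∈ range n, a i * b i| ≤ √(∑' ℓ, a ℓ ^ 2) * √(∑' ℓ, b (n + ℓ) ^ 2) := by
  have htail : t - ∑ i ∈ range n, a i * b i = ∑' ℓ, a (ℓ + n) * b (ℓ + n) :=
    ((hasSum_nat_add_iff' n).2 ht).tsum_eq.symm
  have hsub : ∑' ℓ, a (ℓ + n) ^ 2 ≤ ∑' ℓ, a ℓ ^ 2 :=
    tsum_comp_le_tsum_of_inj ha (fun _ => sq_nonneg _) (add_left_injective n)
  rw [htail]
  calc _ ≤ √(∑' ℓ, a (ℓ + n) ^ 2) * √(∑' ℓ, b (ℓ + n) ^ 2) :=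
        abs_tsum_mul_le_sqrt_mul_sqrt ((summable_nat_add_iff n).2 ha)
          ((summable_nat_add_iff n).2 hb)
    _ ≤ _ := by
        simp_rw [add_comm _ n] at hsub ⊢
        exact mul_le_mul_of_nonneg_right (Real.sqrt_le_sqrt hsub) (Real.sqrt_nonneg _)

theorem sum_eval_mul_lagrange_eq {ι X R : Type*} [Fintype ι] [DecidableEq ι] [CommRing R]
    {φ : ι → X → R} {pts : ι → X} {u : ι → X → R}
    (hu_span : ∀ k, ∃ a : ι → R, ∀ x, u k x = ∑ m, a m * φ m x)
    (hu : ∀ k m, u k (pts m) = if k = m then 1 else 0)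
    {g : X → R} (hg : ∃ d : ι → R, ∀ x, g x = ∑ m, d m * φ m x) (x : X) :
    ∑ k, g (pts k) * u k x = g x := by
  choose a ha using hu_span
  obtain ⟨d, hd⟩ := hg
  -- `hu` says `A * E = 1` for the coefficient matrix `A` of the `u k`; since `E` is square,
  -- also `E * A = 1`, which is exactly the reproduction of the `φ m`.
  set E : Matrix ι ι R := of fun m k => φ m (pts k)
  have hAE : of a * E = 1 := by
    ext k j
    simpa [E, mul_apply, one_apply, ← ha] using hu k j
  have hgpts : (fun k => g (pts k)) = d ᵥ* E := by
    ext k; simp [E, hd, vecMul, dotProduct]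
  have hux : (fun k => u k x) = of a *ᵥ fun m => φ m x := by
    ext k; simp [ha, mulVec, dotProduct]
  calc ∑ k, g (pts k) * u k x = (d ᵥ* E) ⬝ᵥ (of a *ᵥ fun m => φ m x) := by
        rw [← hgpts, ← hux]; rfl
    _ = d ⬝ᵥ ((E * of a) *ᵥ fun m => φ m x) := by rw [← dotProduct_mulVec, mulVec_mulVec]
    _ = g x := by rw [mul_eq_one_comm.mp hAE, one_mulVec, hd]; rfl

theorem abs_sub_sum_mul_le_mul_one_add {ι X : Type*} [Fintype ι] {Ω : Set X} {r : X → ℝ}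
    {M Λ : ℝ} (hr : ∀ y ∈ Ω, |r y| ≤ M) {pts : ι → X} (hpts : ∀ k, pts k ∈ Ω)
    {w : ι → ℝ} (hw : ∑ k, |w k| ≤ Λ) {x : X} (hx : x ∈ Ω) :
    |r x - ∑ k, r (pts k) * w k| ≤ M * (1 + Λ) := by
  have hM : 0 ≤ M := (abs_nonneg _).trans (hr x hx)
  calc |r x - ∑ k, r (pts k) * w k| ≤ |r x| + ∑ k, |r (pts k)| * |w k| := by
        refine (abs_sub _ _).trans (add_le_add_right ?_ _)
        simpa only [abs_mul] using abs_sum_le_sum_abs (fun k => r (pts k) * w k) univ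
    _ ≤ M + ∑ k, M * |w k| := by
        gcongr with k
        exacts [hr x hx, hr _ (hpts k)]
    _ = M + M * ∑ k, |w k| := by rw [mul_sum]
    _ ≤ M * (1 + Λ) := by nlinarith [mul_le_mul_of_nonneg_left hw hM]

/-- uniform bound for the interpolant `s` to `f` from the span of the first
`n` basis functions at points `x_1,…,x_n`, in terms of the Lebesgue constant `Λ` of the
Lagrange basis functions `u_k` and the uniform tail `S` of the expansion of the kernel. -/
theorem basis_interpolant_error_bound
    {X : Type*} (Ω : Set X) (φ : ℕ → X → ℝ) (f : X → ℝ) (c : ℕ → ℝ)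
    -- f ∈ H_K(Ω): square-summable coefficients, pointwise convergent expansion
    (hc : Summable (fun ℓ => (c ℓ) ^ 2))
    (hφ : ∀ x ∈ Ω, Summable (fun ℓ => (φ ℓ x) ^ 2))
    (hf : ∀ x ∈ Ω, HasSum (fun ℓ => c ℓ * φ ℓ x) (f x))
    (n : ℕ) (pts : Fin n → X) (hpts : ∀ k, pts k ∈ Ω)
    -- Lagrange basis functions u_k ∈ span{φ_0,…,φ_{n-1}} with u_k(x_m) = δ_{km}
    (u : Fin n → X → ℝ)
    (hu_span : ∀ k, ∃ a : Fin n → ℝ, ∀ x, u k x = ∑ m, a m * φ (m : ℕ) x)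
    (hu_card : ∀ k m, u k (pts m) = if k = m then (1 : ℝ) else 0)
    -- the interpolant s ∈ span{φ_0,…,φ_{n-1}} to f at the points
    (s : X → ℝ)
    (hs_span : ∃ a : Fin n → ℝ, ∀ x, s x = ∑ m, a m * φ (m : ℕ) x)
    (hs_interp : ∀ k, s (pts k) = f (pts k))
    -- Lebesgue constant and uniform tail bound
    (Λ S : ℝ)
    (hΛ : ∀ x ∈ Ω, ∑ k, |u k x| ≤ Λ)
    (hS : ∀ x ∈ Ω, Real.sqrt (∑' ℓ, (φ (n + ℓ) x) ^ 2) ≤ S) :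
    ∀ x ∈ Ω, |f x - s x| ≤ Real.sqrt (∑' ℓ, (c ℓ) ^ 2) * (1 + Λ) * S := by
  intro x hx
  obtain ⟨b, hb⟩ := hs_span
  set r : X → ℝ := fun y => f y - ∑ m : Fin n, c m * φ m y with hr_def
  have hr : ∀ y ∈ Ω, |r y| ≤ √(∑' ℓ, c ℓ ^ 2) * S := fun y hy => by
    have htail := abs_sub_sum_range_le_sqrt_mul_sqrt hc (hφ y hy) (hf y hy) n
    rw [← Fin.sum_univ_eq_sum_range (fun i => c i * φ i y)] at htail
    exact htail.trans (mul_le_mul_of_nonneg_left (hS y hy) (Real.sqrt_nonneg _))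
  have hs_lagrange : s x - ∑ m : Fin n, c m * φ m x = ∑ k, r (pts k) * u k x := by
    rw [← sum_eval_mul_lagrange_eq hu_span hu_card
      (g := fun y => s y - ∑ m : Fin n, c m * φ m y)
      ⟨fun m => b m - c m, fun y => by simp only [hb, sub_mul, sum_sub_distrib]⟩ x]
    simp [r, hs_interp]
  have hfs : f x - s x = r x - ∑ k, r (pts k) * u k x := by
    rw [← hs_lagrange, hr_def]; ring
  rw [hfs, mul_right_comm]
  exact abs_sub_sum_mul_le_mul_one_add hr hpts (hΛ x hx) hx
end

section
/- Under the same setting, the kernel interpolant s_f (the minimum-norm interpolant to f ∈ H_K(Ω) at points X_n) satisfies the uniform bound sup_{x∈Ω} |f(x) − s_f(x)| ≤ 2‖f‖_{H_K(Ω)} (1 + Λ_φ(X_n)) sup_{y∈Ω} (Σ_{ℓ=n+1}^∞ φ_ℓ(y)^2)^{1/2}. -/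
/-!
Write `I` for interpolation at the nodes in the Lagrange basis `u`. Splitting a function `g`
with coefficients `d` into its first `n` modes `p` and the tail `t`, interpolation reproduces
`p`, so `g - I g = t - I t`; by Cauchy–Schwarz `|t| ≤ ‖d‖ S` on `Ω`, hence
`|g - I g| ≤ ‖d‖ (1 + Λ) S`.
Since `s` interpolates `f`, `I s = I f` and `f - s = (f - I f) - (s - I s)`; minimality of `s`
gives `‖s‖ ≤ ‖f‖`, whence the factor `2`.
-/

open Finset Matrix

theorem abs_tsum_nat_add_mul_le {a b : ℕ → ℝ} (n : ℕ) (ha : Summable fun i => a i ^ 2)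
    (hb : Summable fun i => b (i + n) ^ 2) :
    |∑' i, a (i + n) * b (i + n)| ≤ √(∑' i, a i ^ 2) * √(∑' i, b (i + n) ^ 2) := by
  have ha_tail : Summable fun i => a (i + n) ^ 2 := (summable_nat_add_iff n).mpr ha
  refine (abs_tsum_mul_le_sqrt_mul_sqrt ha_tail hb).trans ?_
  refine mul_le_mul_of_nonneg_right (Real.sqrt_le_sqrt ?_) (Real.sqrt_nonneg _)
  exact tsum_comp_le_tsum_of_inj ha (fun i => sq_nonneg _) (add_left_injective n)

section LagrangeInterpolation

variable {ι X R : Type*} [Fintype ι]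

def lagrangeInterp [CommRing R] (u : ι → X → R) (pts : ι → X) (g : X → R) (x : X) : R :=
  ∑ k, g (pts k) * u k x

theorem lagrangeInterp_congr [CommRing R] {u : ι → X → R} {pts : ι → X} {g h : X → R}
    (hgh : ∀ k, g (pts k) = h (pts k)) : lagrangeInterp u pts g = lagrangeInterp u pts h := by
  funext x
  simp only [lagrangeInterp, hgh]

theorem lagrangeInterp_add [CommRing R] (u : ι → X → R) (pts : ι → X) (g h : X → R)
    (x : X) :
    lagrangeInterp u pts (g + h) x = lagrangeInterp u pts g x + lagrangeInterp u pts h x := by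
  simp only [lagrangeInterp, Pi.add_apply, add_mul, sum_add_distrib]

theorem abs_lagrangeInterp_le {u : ι → X → ℝ} {pts : ι → X} {g : X → ℝ} {M : ℝ}
    (hg : ∀ k, |g (pts k)| ≤ M) (x : X) :
    |lagrangeInterp u pts g x| ≤ M * ∑ k, |u k x| := by
  rw [lagrangeInterp, mul_sum]
  refine (abs_sum_le_sum_abs _ _).trans (sum_le_sum fun k _ => ?_)
  rw [abs_mul]
  exact mul_le_mul_of_nonneg_right (hg k) (abs_nonneg _)

/-- If the cardinal functions `u k` lie in the span of `v`, the coefficient matrix of the `u k`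
and the collocation matrix `(v m (pts k))` are mutually inverse, so interpolation reproduces
the span of `v`. -/
theorem lagrangeInterp_of_mem_span [DecidableEq ι] [CommRing R] {u v : ι → X → R}
    {pts : ι → X}
    (hu_span : ∀ k, ∃ a : ι → R, ∀ x, u k x = ∑ m, a m * v m x)
    (hu_card : ∀ k m, u k (pts m) = if k = m then 1 else 0) (e : ι → R) (x : X) :
    lagrangeInterp u pts (fun y => ∑ m, e m * v m y) x = ∑ m, e m * v m x := by
  choose a ha using hu_span
  set A : Matrix ι ι R := Matrix.of a
  set B : Matrix ι ι R := Matrix.of fun m k => v m (pts k)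
  have hAB : A * B = 1 := by
    ext k j
    simpa [A, B, Matrix.mul_apply, Matrix.one_apply] using
      (ha k (pts j)).symm.trans (hu_card k j)
  have hu : (fun k => u k x) = A *ᵥ fun m => v m x := funext fun k => ha k x
  calc lagrangeInterp u pts (fun y => ∑ m, e m * v m y) x
      = (e ᵥ* B) ⬝ᵥ (A *ᵥ fun m => v m x) := by
        rw [← hu]; rfl
    _ = ∑ m, e m * v m x := by
        rw [Matrix.dotProduct_mulVec, Matrix.vecMul_vecMul, mul_eq_one_comm.mp hAB,
          Matrix.vecMul_one]; rfl

end LagrangeInterpolation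

theorem HasSum.eq_sum_range_add_tsum_nat_add {G : Type*} [AddCommGroup G] [TopologicalSpace G]
    [IsTopologicalAddGroup G] [T2Space G] {a : ℕ → G} {g : G} (h : HasSum a g) (n : ℕ) :
    g = ∑ i ∈ range n, a i + ∑' i, a (i + n) := by
  rw [h.summable.sum_add_tsum_nat_add n, h.tsum_eq]

theorem abs_sub_lagrangeInterp_le {X : Type*} {Ω : Set X} {φ : ℕ → X → ℝ}
    (hφ : ∀ x ∈ Ω, Summable fun ℓ => φ ℓ x ^ 2)
    {n : ℕ} {pts : Fin n → X} (hpts : ∀ k, pts k ∈ Ω) {u : Fin n → X → ℝ}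
    (hu_span : ∀ k, ∃ a : Fin n → ℝ, ∀ x, u k x = ∑ m, a m * φ (m : ℕ) x)
    (hu_card : ∀ k m, u k (pts m) = if k = m then 1 else 0)
    {Λ S : ℝ} (hΛ : ∀ x ∈ Ω, ∑ k, |u k x| ≤ Λ)
    (hS : ∀ x ∈ Ω, √(∑' ℓ, φ (n + ℓ) x ^ 2) ≤ S)
    {g : X → ℝ} {d : ℕ → ℝ} (hd : Summable fun ℓ => d ℓ ^ 2)
    (hg : ∀ x ∈ Ω, HasSum (fun ℓ => d ℓ * φ ℓ x) (g x)) {x : X} (hx : x ∈ Ω) :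
    |g x - lagrangeInterp u pts g x| ≤ √(∑' ℓ, d ℓ ^ 2) * (1 + Λ) * S := by
  set M := √(∑' ℓ, d ℓ ^ 2)
  set p : X → ℝ := fun y => ∑ m : Fin n, d m * φ m y
  set t : X → ℝ := fun y => ∑' i, d (i + n) * φ (i + n) y
  have hsplit : ∀ k, g (pts k) = (p + t) (pts k) := fun k => by
    rw [(hg _ (hpts k)).eq_sum_range_add_tsum_nat_add n, ← Fin.sum_univ_eq_sum_range]
    rfl
  have htail : ∀ y ∈ Ω, |t y| ≤ M * S := fun y hy => by
    have hφ_tail : Summable fun i => φ (i + n) y ^ 2 := (summable_nat_add_iff n).mpr (hφ y hy)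
    refine (abs_tsum_nat_add_mul_le (b := fun ℓ => φ ℓ y) n hd hφ_tail).trans
      (mul_le_mul_of_nonneg_left ?_ (Real.sqrt_nonneg _))
    exact (congrArg _ (tsum_congr fun i => by rw [add_comm])).trans_le (hS y hy)
  have hMS : 0 ≤ M * S := (abs_nonneg _).trans (htail x hx)
  have hinterp : lagrangeInterp u pts g x = p x + lagrangeInterp u pts t x := by
    rw [lagrangeInterp_congr hsplit, lagrangeInterp_add,
      lagrangeInterp_of_mem_span hu_span hu_card]
  have hgx : g x = p x + t x := by
    rw [(hg x hx).eq_sum_range_add_tsum_nat_add n, ← Fin.sum_univ_eq_sum_range]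
  calc |g x - lagrangeInterp u pts g x| = |t x - lagrangeInterp u pts t x| := by
        rw [hinterp, hgx, add_sub_add_left_eq_sub]
    _ ≤ |t x| + |lagrangeInterp u pts t x| := abs_sub _ _
    _ ≤ M * S + M * S * Λ := add_le_add (htail x hx)
        ((abs_lagrangeInterp_le (fun k => htail _ (hpts k)) x).trans
          (mul_le_mul_of_nonneg_left (hΛ x hx) hMS))
    _ = M * (1 + Λ) * S := by ring

/-- uniform bound for the minimum-norm (kernel) interpolant `s` of
`f ∈ H_K(Ω)` at points `x_1,…,x_n`:
`sup_Ω |f − s| ≤ 2 ‖f‖ (1 + Λ_φ(X_n)) sup_Ω (Σ_{ℓ>n} φ_ℓ²)^{1/2}`. -/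
theorem kernel_interpolant_error_bound
    {X : Type*} (Ω : Set X) (φ : ℕ → X → ℝ) (f : X → ℝ) (c : ℕ → ℝ)
    -- f ∈ H_K(Ω): square-summable coefficients, pointwise convergent expansion
    (hc : Summable (fun ℓ => (c ℓ) ^ 2))
    (hφ : ∀ x ∈ Ω, Summable (fun ℓ => (φ ℓ x) ^ 2))
    (hf : ∀ x ∈ Ω, HasSum (fun ℓ => c ℓ * φ ℓ x) (f x))
    (n : ℕ) (pts : Fin n → X) (hpts : ∀ k, pts k ∈ Ω)
    -- Lagrange basis functions u_k ∈ span{φ_0,…,φ_{n-1}} with u_k(x_m) = δ_{km},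
    -- whose existence encodes invertibility of Φ_{X_n}
    (u : Fin n → X → ℝ)
    (hu_span : ∀ k, ∃ a : Fin n → ℝ, ∀ x, u k x = ∑ m, a m * φ (m : ℕ) x)
    (hu_card : ∀ k m, u k (pts m) = if k = m then (1 : ℝ) else 0)
    -- the kernel interpolant s: the minimum-norm element of H_K(Ω) interpolating f
    (s : X → ℝ) (b : ℕ → ℝ)
    (hb : Summable (fun ℓ => (b ℓ) ^ 2))
    (hs : ∀ x ∈ Ω, HasSum (fun ℓ => b ℓ * φ ℓ x) (s x))
    (hs_interp : ∀ k, s (pts k) = f (pts k))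
    (hs_min : ∀ (g : X → ℝ) (d : ℕ → ℝ), Summable (fun ℓ => (d ℓ) ^ 2) →
      (∀ x ∈ Ω, HasSum (fun ℓ => d ℓ * φ ℓ x) (g x)) →
      (∀ k, g (pts k) = f (pts k)) →
      (∑' ℓ, (b ℓ) ^ 2) ≤ ∑' ℓ, (d ℓ) ^ 2)
    -- Lebesgue constant and uniform tail bound
    (Λ S : ℝ)
    (hΛ : ∀ x ∈ Ω, ∑ k, |u k x| ≤ Λ)
    (hS : ∀ x ∈ Ω, Real.sqrt (∑' ℓ, (φ (n + ℓ) x) ^ 2) ≤ S) :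
    ∀ x ∈ Ω, |f x - s x| ≤ 2 * Real.sqrt (∑' ℓ, (c ℓ) ^ 2) * (1 + Λ) * S := by
  intro x hx
  have hf_err := abs_sub_lagrangeInterp_le hφ hpts hu_span hu_card hΛ hS hc hf hx
  have hs_err := abs_sub_lagrangeInterp_le hφ hpts hu_span hu_card hΛ hS hb hs hx
  rw [lagrangeInterp_congr hs_interp, abs_sub_comm] at hs_err
  have hbc : √(∑' ℓ, b ℓ ^ 2) ≤ √(∑' ℓ, c ℓ ^ 2) :=
    Real.sqrt_le_sqrt (hs_min f c hc hf fun _ => rfl)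
  have hΛS : 0 ≤ (1 + Λ) * S := by
    have hΛ0 : 0 ≤ Λ := (sum_nonneg fun k _ => abs_nonneg (u k x)).trans (hΛ x hx)
    have hS0 : 0 ≤ S := (Real.sqrt_nonneg _).trans (hS x hx)
    positivity
  calc |f x - s x| ≤ |f x - lagrangeInterp u pts f x| + |lagrangeInterp u pts f x - s x| :=
        abs_sub_le _ _ _
    _ ≤ 2 * √(∑' ℓ, c ℓ ^ 2) * (1 + Λ) * S := by
        linarith [mul_le_mul_of_nonneg_right hbc hΛS]
end

section
/- Let φ_ℓ(x) = sqrt(2^ℓ ε^{2ℓ}/ℓ!) x^ℓ exp(−ε^2 x^2) and c_Ω = sup_{x∈Ω}|x| < ∞ for Ω ⊂ ℝ compact. If n ≥ 2ε^2 c_Ω^2, then sup_{x∈Ω} (Σ_{ℓ=n}^∞ φ_ℓ(x)^2)^{1/2} ≤ (√2 ε c_Ω)^n / √(n!). -/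
noncomputable def gaussPhi (ε : ℝ) (ℓ : ℕ) (x : ℝ) : ℝ :=
  Real.sqrt ((2 : ℝ) ^ ℓ * ε ^ (2 * ℓ) / (Nat.factorial ℓ)) * x ^ ℓ *
    Real.exp (-(ε ^ 2) * x ^ 2)

lemma gaussPhi_sq (ε : ℝ) (ℓ : ℕ) (x : ℝ) :
    (gaussPhi ε ℓ x) ^ 2 =
      (2 * ε ^ 2 * x ^ 2) ^ ℓ / (Nat.factorial ℓ) * Real.exp (-(2 * ε ^ 2 * x ^ 2)) := by
  have ha : (0:ℝ) ≤ (2 : ℝ) ^ ℓ * ε ^ (2 * ℓ) / (Nat.factorial ℓ) := by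
    apply div_nonneg (mul_nonneg (by positivity) ((even_two_mul ℓ).pow_nonneg ε)) (by positivity)
  unfold gaussPhi
  rw [mul_pow, mul_pow, Real.sq_sqrt ha, ← Real.exp_nat_mul]
  rw [show ((2:ℕ):ℝ) * (-(ε ^ 2) * x ^ 2) = -(2 * ε ^ 2 * x ^ 2) by push_cast; ring]
  rw [mul_pow, mul_pow, ← pow_mul, ← pow_mul]
  ring_nf

theorem tsum_tail_le (t : ℝ) (ht : 0 ≤ t) (n : ℕ) :
    (∑' ℓ : ℕ, t ^ (n + ℓ) / (Nat.factorial (n + ℓ)) * Real.exp (-t)) ≤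
      t ^ n / Nat.factorial n := by
  have hsum : Summable (fun ℓ : ℕ => t ^ n / Nat.factorial n * (t ^ ℓ / Nat.factorial ℓ)
      * Real.exp (-t)) := by
    exact ((Real.summable_pow_div_factorial t).mul_left _).mul_right _
  have hle : ∀ ℓ : ℕ, t ^ (n + ℓ) / (Nat.factorial (n + ℓ)) * Real.exp (-t) ≤
      t ^ n / Nat.factorial n * (t ^ ℓ / Nat.factorial ℓ) * Real.exp (-t) := by
    intro ℓ
    have hfac : (Nat.factorial n * Nat.factorial ℓ : ℝ) ≤ Nat.factorial (n + ℓ) := by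
      exact_mod_cast Nat.le_of_dvd (Nat.factorial_pos _)
        (Nat.factorial_mul_factorial_dvd_factorial_add n ℓ)
    have h1 : t ^ (n + ℓ) / (Nat.factorial (n + ℓ)) ≤
        t ^ (n + ℓ) / (Nat.factorial n * Nat.factorial ℓ) := by
      apply div_le_div_of_nonneg_left (by positivity) (by positivity) hfac
    calc t ^ (n + ℓ) / (Nat.factorial (n + ℓ)) * Real.exp (-t)
        ≤ t ^ (n + ℓ) / (Nat.factorial n * Nat.factorial ℓ) * Real.exp (-t) :=
          mul_le_mul_of_nonneg_right h1 (Real.exp_nonneg _)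
      _ = t ^ n / Nat.factorial n * (t ^ ℓ / Nat.factorial ℓ) * Real.exp (-t) := by
          rw [pow_add]; ring
  have hsum' : Summable (fun ℓ : ℕ => t ^ (n + ℓ) / (Nat.factorial (n + ℓ)) * Real.exp (-t)) :=
    Summable.of_nonneg_of_le (fun ℓ => by positivity) hle hsum
  calc (∑' ℓ : ℕ, t ^ (n + ℓ) / (Nat.factorial (n + ℓ)) * Real.exp (-t))
      ≤ ∑' ℓ : ℕ, t ^ n / Nat.factorial n * (t ^ ℓ / Nat.factorial ℓ) * Real.exp (-t) :=
        Summable.tsum_le_tsum hle hsum' hsum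
    _ = t ^ n / Nat.factorial n * Real.exp t * Real.exp (-t) := by
        rw [tsum_mul_right, tsum_mul_left]
        congr 2
        rw [Real.exp_eq_exp_ℝ, NormedSpace.exp_eq_tsum_div]
    _ = t ^ n / Nat.factorial n := by
        rw [mul_assoc, ← Real.exp_add, add_neg_cancel, Real.exp_zero, mul_one]

/-- for `Ω ⊂ ℝ` compact with `c_Ω = sup_{x∈Ω}|x|` and `n ≥ 2ε²c_Ω²`,
`sup_{x∈Ω} (Σ_{ℓ≥n} φ_ℓ(x)²)^{1/2} ≤ (√2 ε c_Ω)^n / √(n!)`. -/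
theorem gaussian_tail_bound (ε : ℝ) (hε : 0 < ε)
    (Ω : Set ℝ) (hΩ : IsCompact Ω) (hne : Ω.Nonempty)
    (c : ℝ) (hc : c = sSup ((fun x => |x|) '' Ω))
    (n : ℕ) (hn : 2 * ε ^ 2 * c ^ 2 ≤ n) :
    ∀ x ∈ Ω,
      Real.sqrt (∑' ℓ : ℕ, (gaussPhi ε (n + ℓ) x) ^ 2) ≤
        (Real.sqrt 2 * ε * c) ^ n / Real.sqrt (Nat.factorial n) := by
  intro x hx
  -- |x| ≤ c
  have hbdd : BddAbove ((fun x => |x|) '' Ω) :=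
    (hΩ.image (continuous_abs)).bddAbove
  have hxc : |x| ≤ c := by
    rw [hc]; exact le_csSup hbdd ⟨x, hx, rfl⟩
  have hc0 : 0 ≤ c := le_trans (abs_nonneg x) hxc
  set t : ℝ := 2 * ε ^ 2 * x ^ 2 with ht_def
  have ht : 0 ≤ t := by positivity
  have hx2 : x ^ 2 ≤ c ^ 2 := by
    have := sq_abs x ▸ pow_le_pow_left₀ (abs_nonneg x) hxc 2
    simpa [sq_abs] using this
  have htc : t ≤ 2 * ε ^ 2 * c ^ 2 := by
    apply mul_le_mul_of_nonneg_left hx2 (by positivity)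
  have key : (∑' ℓ : ℕ, (gaussPhi ε (n + ℓ) x) ^ 2) ≤ (2 * ε ^ 2 * c ^ 2) ^ n /
      Nat.factorial n := by
    have h1 : (∑' ℓ : ℕ, (gaussPhi ε (n + ℓ) x) ^ 2) =
        ∑' ℓ : ℕ, t ^ (n + ℓ) / (Nat.factorial (n + ℓ)) * Real.exp (-t) := by
      exact tsum_congr fun ℓ => gaussPhi_sq ε (n + ℓ) x
    rw [h1]
    calc (∑' ℓ : ℕ, t ^ (n + ℓ) / (Nat.factorial (n + ℓ)) * Real.exp (-t))
        ≤ t ^ n / Nat.factorial n := tsum_tail_le t ht n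
      _ ≤ (2 * ε ^ 2 * c ^ 2) ^ n / Nat.factorial n := by
          apply div_le_div_of_nonneg_right ?_ (by positivity)
          · exact pow_le_pow_left₀ ht htc n
  have hB : (0:ℝ) ≤ (Real.sqrt 2 * ε * c) ^ n / Real.sqrt (Nat.factorial n) := by positivity
  have hB2 : ((Real.sqrt 2 * ε * c) ^ n / Real.sqrt (Nat.factorial n)) ^ 2 =
      (2 * ε ^ 2 * c ^ 2) ^ n / Nat.factorial n := by
    have h2 : (Real.sqrt 2 * ε * c) ^ 2 = 2 * ε ^ 2 * c ^ 2 := by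
      rw [mul_pow, mul_pow, Real.sq_sqrt (by norm_num : (0:ℝ) ≤ 2)]
    rw [div_pow, ← pow_mul, mul_comm n 2, pow_mul, h2, Real.sq_sqrt (by positivity)]
  calc Real.sqrt (∑' ℓ : ℕ, (gaussPhi ε (n + ℓ) x) ^ 2)
      ≤ Real.sqrt ((2 * ε ^ 2 * c ^ 2) ^ n / Nat.factorial n) := Real.sqrt_le_sqrt key
    _ = (Real.sqrt 2 * ε * c) ^ n / Real.sqrt (Nat.factorial n) := by
        rw [← hB2, Real.sqrt_sq hB]
end

section
/- Let Ω ⊂ ℝ be a compact interval, ε > 0, and Λ_pol(X_n) = sup_{x∈Ω} Σ_k |l_k(x)| the polynomial Lebesgue constant at distinct points X_n ⊂ Ω. Then there exist constants C_1, C_2 > 0 (depending only on Ω and ε) such that C_1 Λ_pol(X_n) ≤ Λ_φ(X_n) ≤ C_2 Λ_pol(X_n) for every set X_n of distinct points in Ω, where Λ_φ is the Lebesgue constant for the truncated Gaussian basis. -/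
/-- on a compact interval `Ω = [a,b]`, the Lebesgue constant
`Λ_φ` of the truncated Gaussian basis (whose Lagrange functions are
`u_k(y) = exp(ε²x_k² − ε²y²) l_k(y)`) is equivalent, with constants depending only on
`Ω` and `ε`, to the polynomial Lebesgue constant `Λ_pol(X_n) = sup_Ω Σ_k |l_k|`. -/
theorem gaussian_vs_polynomial_lebesgue_constant
    (a b : ℝ) (hab : a ≤ b) (ε : ℝ) (hε : 0 < ε) :
    ∃ C₁ C₂ : ℝ, 0 < C₁ ∧ 0 < C₂ ∧
      ∀ (n : ℕ) (x : Fin n → ℝ), Function.Injective x → (∀ k, x k ∈ Set.Icc a b) →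
        (C₁ * sSup ((fun y => ∑ k, |∏ ℓ ∈ Finset.univ.erase k,
              (y - x ℓ) / (x k - x ℓ)|) '' Set.Icc a b) ≤
          sSup ((fun y => ∑ k, |Real.exp (ε ^ 2 * (x k) ^ 2 - ε ^ 2 * y ^ 2) *
              ∏ ℓ ∈ Finset.univ.erase k, (y - x ℓ) / (x k - x ℓ)|) '' Set.Icc a b)) ∧
        (sSup ((fun y => ∑ k, |Real.exp (ε ^ 2 * (x k) ^ 2 - ε ^ 2 * y ^ 2) *
              ∏ ℓ ∈ Finset.univ.erase k, (y - x ℓ) / (x k - x ℓ)|) '' Set.Icc a b) ≤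
          C₂ * sSup ((fun y => ∑ k, |∏ ℓ ∈ Finset.univ.erase k,
              (y - x ℓ) / (x k - x ℓ)|) '' Set.Icc a b)) := by
  set c : ℝ := max |a| |b| with hc
  have hc0 : 0 ≤ c := le_trans (abs_nonneg a) (le_max_left _ _)
  refine ⟨Real.exp (-(ε ^ 2 * c ^ 2)), Real.exp (ε ^ 2 * c ^ 2),
    Real.exp_pos _, Real.exp_pos _, ?_⟩
  intro n x hinj hmem
  have hne : (Set.Icc a b).Nonempty := ⟨a, le_refl a, hab⟩
  have hsq : ∀ u ∈ Set.Icc a b, u ^ 2 ≤ c ^ 2 := by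
    intro u hu
    have h2 : u ≤ c := le_trans hu.2 (le_trans (le_abs_self b) (le_max_right _ _))
    have h1 : -c ≤ u := by
      have : -c ≤ a := by
        have : |a| ≤ c := le_max_left _ _
        linarith [neg_abs_le a]
      linarith [hu.1]
    exact sq_le_sq' h1 h2
  set fpol : ℝ → ℝ := fun y => ∑ k, |∏ ℓ ∈ Finset.univ.erase k,
      (y - x ℓ) / (x k - x ℓ)| with hfpol
  set fphi : ℝ → ℝ := fun y => ∑ k, |Real.exp (ε ^ 2 * (x k) ^ 2 - ε ^ 2 * y ^ 2) *
      ∏ ℓ ∈ Finset.univ.erase k, (y - x ℓ) / (x k - x ℓ)| with hfphi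
  have hcont_pol : Continuous fpol :=
    continuous_finset_sum _ fun k _ =>
      (continuous_finset_prod _ fun ℓ _ =>
        (continuous_id.sub continuous_const).div_const _).abs
  have hcont_phi : Continuous fphi :=
    continuous_finset_sum _ fun k _ =>
      ((Real.continuous_exp.comp
          (continuous_const.sub (continuous_const.mul (continuous_pow 2)))).mul
        (continuous_finset_prod _ fun ℓ _ =>
          (continuous_id.sub continuous_const).div_const _)).abs
  have hbdd_pol : BddAbove (fpol '' Set.Icc a b) :=
    (isCompact_Icc.image hcont_pol).bddAbove
  have hbdd_phi : BddAbove (fphi '' Set.Icc a b) :=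
    (isCompact_Icc.image hcont_phi).bddAbove
  -- pointwise bounds
  have hlow : ∀ y ∈ Set.Icc a b, Real.exp (-(ε ^ 2 * c ^ 2)) * fpol y ≤ fphi y := by
    intro y hy
    rw [hfpol, hfphi, Finset.mul_sum]
    refine Finset.sum_le_sum fun k _ => ?_
    rw [abs_mul, abs_of_pos (Real.exp_pos _)]
    apply mul_le_mul_of_nonneg_right _ (abs_nonneg _)
    apply Real.exp_le_exp.mpr
    have h1 : ε ^ 2 * y ^ 2 ≤ ε ^ 2 * c ^ 2 :=
      mul_le_mul_of_nonneg_left (hsq y hy) (sq_nonneg ε)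
    nlinarith [sq_nonneg (x k), sq_nonneg ε]
  have hhigh : ∀ y ∈ Set.Icc a b, fphi y ≤ Real.exp (ε ^ 2 * c ^ 2) * fpol y := by
    intro y hy
    rw [hfpol, hfphi, Finset.mul_sum]
    refine Finset.sum_le_sum fun k _ => ?_
    rw [abs_mul, abs_of_pos (Real.exp_pos _)]
    apply mul_le_mul_of_nonneg_right _ (abs_nonneg _)
    apply Real.exp_le_exp.mpr
    have h1 : ε ^ 2 * (x k) ^ 2 ≤ ε ^ 2 * c ^ 2 :=
      mul_le_mul_of_nonneg_left (hsq (x k) (hmem k)) (sq_nonneg ε)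
    nlinarith [sq_nonneg y, sq_nonneg ε]
  constructor
  · -- lower bound
    set C₁ : ℝ := Real.exp (-(ε ^ 2 * c ^ 2)) with hC₁
    have hC₁pos : 0 < C₁ := Real.exp_pos _
    have key : sSup (fpol '' Set.Icc a b) ≤ sSup (fphi '' Set.Icc a b) / C₁ := by
      apply csSup_le (hne.image _)
      rintro z ⟨y, hy, rfl⟩
      rw [le_div_iff₀ hC₁pos, mul_comm]
      exact le_trans (hlow y hy) (le_csSup hbdd_phi ⟨y, hy, rfl⟩)
    have := mul_le_mul_of_nonneg_left key hC₁pos.le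
    calc C₁ * sSup (fpol '' Set.Icc a b)
        ≤ C₁ * (sSup (fphi '' Set.Icc a b) / C₁) := this
      _ = sSup (fphi '' Set.Icc a b) := by field_simp
  · -- upper bound
    apply csSup_le (hne.image _)
    rintro z ⟨y, hy, rfl⟩
    exact le_trans (hhigh y hy)
      (mul_le_mul_of_nonneg_left (le_csSup hbdd_pol ⟨y, hy, rfl⟩) (Real.exp_pos _).le)
end

section
/- For ε > 0 and m ∈ ℕ, the series Σ_{ℓ=0}^∞ (2ε^2)^{−ℓ} (ℓ+m)!/(ℓ!)^2 converges; consequently the function f_{ε,m}(x) = x^m exp(x − ε^2 x^2) belongs to the RKHS of the Gaussian kernel exp(−ε^2(x−y)^2), with squared norm (2ε^2)^{−m} Σ_{ℓ=0}^∞ (2ε^2)^{−ℓ} (ℓ+m)!/(ℓ!)^2. -/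
open Nat

theorem Nat.factorial_add_le_two_pow_mul (k m : ℕ) : (k + m)! ≤ 2 ^ (k + m) * k ! * m ! := by
  rw [← add_choose_mul_factorial_mul_factorial]
  gcongr
  exact choose_le_two_pow _ _

theorem summable_pow_mul_factorial_add_div_factorial_sq (r : ℝ) (m : ℕ) :
    Summable fun k : ℕ => r ^ k * (k + m)! / (k ! : ℝ) ^ 2 := by
  refine ((Real.summable_pow_div_factorial (2 * |r|)).mul_left ((2 : ℝ) ^ m * m !)).of_norm_bounded
    fun k => ?_
  have hk : (0 : ℝ) < k ! := by positivity
  have hfac : ((k + m)! : ℝ) ≤ 2 ^ (k + m) * k ! * m ! := by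
    exact_mod_cast factorial_add_le_two_pow_mul k m
  calc ‖r ^ k * (k + m)! / (k ! : ℝ) ^ 2‖ = |r| ^ k * (k + m)! / (k ! : ℝ) ^ 2 := by
        rw [norm_div, norm_mul, norm_pow, Real.norm_eq_abs, RCLike.norm_natCast, norm_pow,
          RCLike.norm_natCast]
    _ ≤ |r| ^ k * (2 ^ (k + m) * k ! * m !) / (k ! : ℝ) ^ 2 := by gcongr
    _ = 2 ^ m * m ! * ((2 * |r|) ^ k / k !) := by
        field_simp
        ring

noncomputable def gaussCoeff (ε : ℝ) (m ℓ : ℕ) : ℝ :=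
  if ℓ < m then 0 else (Real.sqrt ((2 * ε ^ 2) ^ ℓ / ℓ !))⁻¹ / (ℓ - m)!

section gaussCoeff

variable (ε : ℝ) (m : ℕ)

theorem gaussCoeff_of_notMem_range {ℓ : ℕ} (h : ℓ ∉ Set.range (· + m)) : gaussCoeff ε m ℓ = 0 :=
  if_pos <| not_le.1 fun hle => h ⟨ℓ - m, Nat.sub_add_cancel hle⟩

theorem gaussCoeff_add (k : ℕ) :
    gaussCoeff ε m (k + m) = (Real.sqrt ((2 * ε ^ 2) ^ (k + m) / (k + m)!))⁻¹ / k ! := by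
  simp [gaussCoeff]

theorem gaussPhi_eq (ℓ : ℕ) (x : ℝ) :
    gaussPhi ε ℓ x = Real.sqrt ((2 * ε ^ 2) ^ ℓ / ℓ !) * x ^ ℓ * Real.exp (-(ε ^ 2) * x ^ 2) := by
  rw [gaussPhi, mul_pow, pow_mul]

theorem gaussCoeff_add_mul_gaussPhi {ε : ℝ} (hε : ε ≠ 0) (k : ℕ) (x : ℝ) :
    gaussCoeff ε m (k + m) * gaussPhi ε (k + m) x =
      x ^ k / k ! * (x ^ m * Real.exp (-(ε ^ 2) * x ^ 2)) := by
  have hsqrt : Real.sqrt ((2 * ε ^ 2) ^ (k + m) / (k + m)!) ≠ 0 := by positivity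
  rw [gaussCoeff_add, gaussPhi_eq]
  field_simp
  ring

theorem gaussCoeff_add_sq (k : ℕ) :
    gaussCoeff ε m (k + m) ^ 2 =
      ((2 * ε ^ 2) ^ m)⁻¹ * (((2 * ε ^ 2) ^ k)⁻¹ * (k + m)! / (k ! : ℝ) ^ 2) := by
  rw [gaussCoeff_add, div_pow, inv_pow, Real.sq_sqrt (by positivity), pow_add]
  field_simp

theorem hasSum_gaussCoeff_mul_gaussPhi {ε : ℝ} (hε : ε ≠ 0) (x : ℝ) :
    HasSum (fun ℓ => gaussCoeff ε m ℓ * gaussPhi ε ℓ x) (x ^ m * Real.exp (x - ε ^ 2 * x ^ 2)) := by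
  have hexp : HasSum (fun k : ℕ => x ^ k / k !) (Real.exp x) := by
    rw [Real.exp_eq_exp_ℝ]
    exact NormedSpace.expSeries_div_hasSum_exp x
  have hshift := hexp.mul_right (x ^ m * Real.exp (-(ε ^ 2) * x ^ 2))
  simp_rw [← gaussCoeff_add_mul_gaussPhi m hε] at hshift
  rw [← (add_left_injective m).hasSum_iff fun ℓ hℓ => by
    rw [gaussCoeff_of_notMem_range ε m hℓ, zero_mul]]
  rwa [sub_eq_add_neg, Real.exp_add, ← neg_mul, mul_left_comm]

theorem hasSum_gaussCoeff_sq :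
    HasSum (fun ℓ => gaussCoeff ε m ℓ ^ 2) (((2 * ε ^ 2) ^ m)⁻¹ *
      ∑' k : ℕ, ((2 * ε ^ 2) ^ k)⁻¹ * (k + m)! / (k ! : ℝ) ^ 2) := by
  have hsum : Summable fun k : ℕ => ((2 * ε ^ 2) ^ k)⁻¹ * (k + m)! / (k ! : ℝ) ^ 2 := by
    simpa only [inv_pow] using summable_pow_mul_factorial_add_div_factorial_sq (2 * ε ^ 2)⁻¹ m
  rw [← (add_left_injective m).hasSum_iff fun ℓ hℓ => by
    rw [gaussCoeff_of_notMem_range ε m hℓ, zero_pow two_ne_zero]]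
  simpa only [Function.comp_def, gaussCoeff_add_sq] using hsum.hasSum.mul_left _

end gaussCoeff

/-- the series `Σ_ℓ (2ε²)^{−ℓ} (ℓ+m)!/(ℓ!)²` converges, and
`f_{ε,m}(x) = x^m exp(x − ε²x²)` belongs to the RKHS of the Gaussian kernel:
it has a square-summable coefficient sequence in the orthonormal basis `{φ_ℓ}`,
with squared norm `(2ε²)^{−m} Σ_ℓ (2ε²)^{−ℓ} (ℓ+m)!/(ℓ!)²`. -/
theorem gaussian_rkhs_test_function (ε : ℝ) (hε : 0 < ε) (m : ℕ) :
    Summable (fun ℓ : ℕ =>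
      ((2 * ε ^ 2) ^ ℓ)⁻¹ * (Nat.factorial (ℓ + m) : ℝ) / ((Nat.factorial ℓ : ℝ)) ^ 2) ∧
    ∃ c : ℕ → ℝ,
      (∀ x : ℝ, HasSum (fun ℓ => c ℓ * gaussPhi ε ℓ x)
        (x ^ m * Real.exp (x - ε ^ 2 * x ^ 2))) ∧
      Summable (fun ℓ => (c ℓ) ^ 2) ∧
      (∑' ℓ, (c ℓ) ^ 2) = ((2 * ε ^ 2) ^ m)⁻¹ *
        ∑' ℓ : ℕ, ((2 * ε ^ 2) ^ ℓ)⁻¹ * (Nat.factorial (ℓ + m) : ℝ) /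
          ((Nat.factorial ℓ : ℝ)) ^ 2 := by
  refine ⟨by simpa only [inv_pow] using
      summable_pow_mul_factorial_add_div_factorial_sq (2 * ε ^ 2)⁻¹ m,
    gaussCoeff ε m, hasSum_gaussCoeff_mul_gaussPhi m hε.ne', ?_, ?_⟩
  · exact (hasSum_gaussCoeff_sq ε m).summable
  · exact (hasSum_gaussCoeff_sq ε m).tsum_eq
end
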